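/- arXiv:2009.01874 — 5 statements merged into one kernel-verified Lean document; each statement's English description precedes it below -/
import Mathlib

section
/- Let $n \geq 4$ be a perfect square, $k < \sqrt{n}/2$, and let $e(k) = \mathbb{E}_x[x_1 \cdots x_k]$ where $x$ is uniform on the slice $\{x \in \{\pm 1\}^n : \sum_i x_i = \sqrt{n}\}$. Then $|e(k)| \leq 2 \cdot 3^{k^3} \cdot n^{-k/2}$. -/
/-!
Write `x_T = ∏_{i ∈ T} xᵢ` and `m = √n`. On the slice `∑ᵢ xᵢ = m`, multiplying `x_T` by `∑ᵢ xᵢ`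
and using `xᵢ² = 1` gives `m E[x_T] = ∑_{i ∈ T} E[x_{T \ i}] + ∑_{i ∉ T} E[x_{T ∪ i}]`. The slice
is invariant under permuting coordinates, so `E[x_T]` depends only on `|T|`, and
`e(j) = E[x₁ ⋯ x_j]` satisfies `m e(j) = j e(j - 1) + (n - j) e(j + 1)`. For `j < m / 2` the
coefficient `n - j` is at least `3m² / 4`, so solving for `e(j + 1)` and inducting on `j` gives
`|e(j)| m^j ≤ 2 ⋅ 3^{j³}`; the growth of `3^{j³}` absorbs both the factor `4 / 3` and the
`j e(j - 1)` term.
-/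

open Finset

lemma four_mul_three_pow_cube_add_le (t : ℕ) :
    4 * (3 ^ ((t + 1) ^ 3) + (t + 1) * 3 ^ (t ^ 3)) ≤ 3 * 3 ^ ((t + 2) ^ 3) := by
  have h1 : 3 * 3 ^ ((t + 1) ^ 3) ≤ 3 ^ ((t + 2) ^ 3) := by
    rw [← pow_succ']
    exact Nat.pow_le_pow_right (by norm_num) (by ring_nf; omega)
  have h2 : 3 * ((t + 1) * 3 ^ (t ^ 3)) ≤ 3 ^ ((t + 2) ^ 3) :=
    calc 3 * ((t + 1) * 3 ^ (t ^ 3)) ≤ 3 * (3 ^ (t + 1) * 3 ^ (t ^ 3)) := by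
          gcongr; exact (Nat.lt_pow_self (by norm_num)).le
      _ = 3 ^ (t ^ 3 + t + 2) := by ring
      _ ≤ 3 ^ ((t + 2) ^ 3) := Nat.pow_le_pow_right (by norm_num) (by ring_nf; omega)
  omega

/-- At `j = 0` the truncated `j - 1` is harmless, its coefficient being `0`. -/
lemma abs_mul_pow_le_of_recurrence {a : ℕ → ℝ} {m : ℝ}
    (hrec : ∀ j : ℕ, (j : ℝ) + 1 < m / 2 →
      m * a j = j * a (j - 1) + (m ^ 2 - j) * a (j + 1)) :
    ∀ j : ℕ, (j : ℝ) < m / 2 → |a j| * m ^ j ≤ 2 * 3 ^ (j ^ 3) * |a 0| := by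
  intro j
  induction j using Nat.twoStepInduction with
  | zero => intro; norm_num; linarith [abs_nonneg (a 0)]
  | one =>
    intro h1
    have h := hrec 0 (by simpa using h1)
    have hm : 0 < m := by linarith
    have ha1 : a 1 * m = a 0 := by
      simp only [CharP.cast_eq_zero, zero_mul, zero_add, sub_zero] at h
      field_simp at h
      linarith
    rw [pow_one, ← abs_of_pos hm, ← abs_mul, ha1]
    norm_num
    linarith [abs_nonneg (a 0)]
  | more t ih0 ih1 =>
    intro ht
    push_cast at ht ih0 ih1 ⊢
    have h0 := ih0 (by linarith)
    have h1 := ih1 (by linarith)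
    have h := hrec (t + 1) (by push_cast; linarith)
    push_cast at h
    simp only [add_assoc, one_add_one_eq_two] at h
    have hm : 0 < m := by linarith
    have hD : 3 / 4 * m ^ 2 ≤ m ^ 2 - (t + 1) := by nlinarith
    have hmt : 0 ≤ m ^ t := by positivity
    have habs : (m ^ 2 - (t + 1)) * |a (t + 2)| ≤ m * |a (t + 1)| + (t + 1) * |a t| := by
      have hsolve : (m ^ 2 - (t + 1)) * a (t + 2) = m * a (t + 1) - (t + 1) * a t := by
        linarith
      have := abs_sub (m * a (t + 1)) ((t + 1) * a t)
      rwa [← hsolve, abs_mul, abs_mul, abs_mul, abs_of_pos hm,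
        abs_of_pos (by linarith : 0 < m ^ 2 - (t + 1)),
        abs_of_pos (by positivity : (0 : ℝ) < t + 1)] at this
    have hpow : 4 * ((3 : ℝ) ^ ((t + 1) ^ 3) + (t + 1) * 3 ^ (t ^ 3)) ≤ 3 * 3 ^ ((t + 2) ^ 3) := by
      exact_mod_cast four_mul_three_pow_cube_add_le t
    have hA := abs_nonneg (a 0)
    calc |a (t + 2)| * m ^ (t + 2)
        ≤ 4 / 3 * ((m ^ 2 - (t + 1)) * |a (t + 2)| * m ^ t) := by
          rw [pow_add]
          nlinarith [mul_le_mul_of_nonneg_right hD (mul_nonneg (abs_nonneg (a (t + 2))) hmt)]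
      _ ≤ 4 / 3 * ((m * |a (t + 1)| + (t + 1) * |a t|) * m ^ t) := by gcongr
      _ = 4 / 3 * (|a (t + 1)| * m ^ (t + 1) + (t + 1) * (|a t| * m ^ t)) := by ring
      _ ≤ 4 / 3 * (2 * 3 ^ ((t + 1) ^ 3) * |a 0| + (t + 1) * (2 * 3 ^ (t ^ 3) * |a 0|)) := by
          gcongr
      _ ≤ 2 * 3 ^ ((t + 2) ^ 3) * |a 0| := by nlinarith

namespace BoolCube

variable {ι : Type*}

noncomputable def spin (s : ι → Bool) (i : ι) : ℝ := if s i then 1 else -1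

lemma spin_mul_self (s : ι → Bool) (i : ι) : spin s i * spin s i = 1 := by
  unfold spin; split <;> norm_num

lemma spin_mul_prod_of_mem [DecidableEq ι] (s : ι → Bool) {i : ι} {T : Finset ι} (hi : i ∈ T) :
    spin s i * ∏ j ∈ T, spin s j = ∏ j ∈ T.erase i, spin s j := by
  rw [← mul_prod_erase T (spin s) hi, ← mul_assoc, spin_mul_self, one_mul]

lemma spin_mul_prod_of_notMem [DecidableEq ι] (s : ι → Bool) {i : ι} {T : Finset ι}
    (hi : i ∉ T) : spin s i * ∏ j ∈ T, spin s j = ∏ j ∈ insert i T, spin s j :=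
  (prod_insert hi).symm

variable [Fintype ι] [DecidableEq ι]

variable (ι) in
noncomputable def slice (c : ℝ) : Finset (ι → Bool) :=
  univ.filter fun s => ∑ i, spin s i = c

lemma mem_slice {c : ℝ} {s : ι → Bool} : s ∈ slice ι c ↔ ∑ i, spin s i = c := by
  simp [slice]

lemma comp_perm_mem_slice_iff {c : ℝ} (σ : Equiv.Perm ι) (s : ι → Bool) :
    s ∘ σ ∈ slice ι c ↔ s ∈ slice ι c := by
  rw [mem_slice, mem_slice, ← Equiv.sum_comp σ (spin s)]
  rfl

noncomputable def sliceMoment (c : ℝ) (T : Finset ι) : ℝ :=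
  (∑ s ∈ slice ι c, ∏ i ∈ T, spin s i) / #(slice ι c)

lemma abs_sliceMoment_empty_le_one (c : ℝ) : |sliceMoment (ι := ι) c ∅| ≤ 1 := by
  simp only [sliceMoment, prod_empty, sum_const, nsmul_eq_mul, mul_one]
  rw [abs_of_nonneg (by positivity)]
  exact div_self_le_one _

lemma sliceMoment_image_perm (c : ℝ) (σ : Equiv.Perm ι) (T : Finset ι) :
    sliceMoment c (T.image σ) = sliceMoment c T := by
  unfold sliceMoment
  congr 1
  refine sum_nbij' (· ∘ σ) (· ∘ σ.symm) (fun s hs => ?_) (fun s hs => ?_)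
    (fun s _ => by ext; simp) (fun s _ => by ext; simp) (fun s _ => ?_)
  · simpa only [mem_coe, comp_perm_mem_slice_iff] using hs
  · simpa only [mem_coe, comp_perm_mem_slice_iff] using hs
  · rw [prod_image fun _ _ _ _ h => σ.injective h]
    rfl

lemma sliceMoment_congr_card (c : ℝ) {T U : Finset ι} (h : #T = #U) :
    sliceMoment c T = sliceMoment c U := by
  have := Set.powersetCard.isPretransitive (α := ι) (n := #T)
  obtain ⟨σ, hσ⟩ := MulAction.exists_smul_eq (Equiv.Perm ι)
    (⟨T, rfl⟩ : Set.powersetCard ι #T) ⟨U, h.symm⟩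
  have hU : T.image σ = U := congrArg Subtype.val hσ
  rw [← hU, sliceMoment_image_perm]

lemma mul_sliceMoment (c : ℝ) (T : Finset ι) :
    c * sliceMoment c T =
      ∑ i ∈ T, sliceMoment c (T.erase i) + ∑ i ∈ Tᶜ, sliceMoment c (insert i T) := by
  have hsum : c * ∑ s ∈ slice ι c, ∏ j ∈ T, spin s j =
      ∑ i, ∑ s ∈ slice ι c, spin s i * ∏ j ∈ T, spin s j := by
    rw [mul_sum, sum_comm]
    refine sum_congr rfl fun s hs => ?_
    rw [← sum_mul, mem_slice.1 hs]
  simp only [sliceMoment, ← sum_div, mul_div_assoc', hsum, ← add_div]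
  rw [← sum_add_sum_compl T]
  congr 2
  · exact sum_congr rfl fun i hi => sum_congr rfl fun s _ => spin_mul_prod_of_mem s hi
  · exact sum_congr rfl fun i hi => sum_congr rfl fun s _ =>
      spin_mul_prod_of_notMem s (mem_compl.1 hi)

lemma mul_sliceMoment_eq_of_card {c : ℝ} {T U V : Finset ι} (hU : #U = #T - 1)
    (hV : #V = #T + 1) :
    c * sliceMoment c T =
      #T * sliceMoment c U + (Fintype.card ι - #T : ℝ) * sliceMoment c V := by
  rw [mul_sliceMoment]
  have hle : #T ≤ Fintype.card ι := card_le_univ T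
  congr 1
  · rw [sum_congr rfl fun i hi => sliceMoment_congr_card c
      (show #(T.erase i) = #U by rw [card_erase_of_mem hi, hU]), sum_const, nsmul_eq_mul]
  · rw [sum_congr rfl fun i hi => sliceMoment_congr_card c
      (show #(insert i T) = #V by rw [card_insert_of_notMem (mem_compl.1 hi), hV]),
      sum_const, nsmul_eq_mul, card_compl, Nat.cast_sub hle]

def firstCoords (n j : ℕ) : Finset (Fin n) := univ.filter fun i => (i : ℕ) < j

lemma map_valEmbedding_firstCoords {n j : ℕ} (h : j ≤ n) :
    (firstCoords n j).map Fin.valEmbedding = range j := by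
  ext l
  simp only [firstCoords, mem_map, mem_filter, mem_univ, true_and, Fin.valEmbedding_apply,
    mem_range]
  exact ⟨fun ⟨i, hi, hil⟩ => hil ▸ hi, fun hl => ⟨⟨l, by omega⟩, hl, rfl⟩⟩

lemma card_firstCoords {n j : ℕ} (h : j ≤ n) : #(firstCoords n j) = j := by
  rw [← card_map Fin.valEmbedding, map_valEmbedding_firstCoords h, card_range]

lemma mul_sliceMoment_firstCoords {n j : ℕ} (c : ℝ) (hj : j < n) :
    c * sliceMoment c (firstCoords n j) =
      j * sliceMoment c (firstCoords n (j - 1)) +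
        (n - j : ℝ) * sliceMoment c (firstCoords n (j + 1)) := by
  have hT := card_firstCoords hj.le
  rw [mul_sliceMoment_eq_of_card (U := firstCoords n (j - 1)) (V := firstCoords n (j + 1))
    (by rw [hT, card_firstCoords (by omega)]) (by rw [hT, card_firstCoords hj]),
    hT, Fintype.card_fin]

end BoolCube

open BoolCube

theorem stmt_10_general (n k : ℕ)
    (hk : (k : ℝ) < Real.sqrt n / 2)
    (S : Finset (Fin n → Bool))
    (hS : S = Finset.univ.filter fun s =>
      (∑ i, (if s i then (1 : ℝ) else -1)) = Real.sqrt n) :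
    |(∑ s ∈ S, ∏ j ∈ Finset.range k,
        (if hj : j < n then (if s ⟨j, hj⟩ then (1 : ℝ) else -1) else 0)) / S.card|
      ≤ 2 * 3 ^ (k ^ 3) / Real.sqrt n ^ k := by
  set m := Real.sqrt n
  have hm : 0 < m := by linarith [(Nat.cast_nonneg k : (0 : ℝ) ≤ k)]
  have hmn : m ^ 2 = n := Real.sq_sqrt (Nat.cast_nonneg n)
  have hn_one : (1 : ℝ) ≤ n := by
    exact_mod_cast Nat.one_le_iff_ne_zero.2 fun h => by simp [m, h] at hm
  have hlt : ∀ j : ℕ, (j : ℝ) < m / 2 → j < n := fun j hj => by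
    exact_mod_cast (show (j : ℝ) < n by nlinarith)
  have hS' : S = slice (Fin n) m := hS
  have hmoment : (∑ s ∈ S, ∏ j ∈ range k,
      (if hj : j < n then (if s ⟨j, hj⟩ then (1 : ℝ) else -1) else 0)) / S.card =
      sliceMoment m (firstCoords n k) := by
    rw [hS', sliceMoment]
    congr 1
    refine sum_congr rfl fun s _ => ?_
    rw [← map_valEmbedding_firstCoords (hlt k hk).le, prod_map]
    exact prod_congr rfl fun i _ => by simp [spin]
  have hbound := abs_mul_pow_le_of_recurrence (a := fun j => sliceMoment m (firstCoords n j))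
    (fun j hj => by
      rw [mul_sliceMoment_firstCoords m (hlt j (by linarith)), hmn]) k hk
  have h0 : |sliceMoment m (firstCoords n 0)| ≤ 1 := by
    simpa [firstCoords] using abs_sliceMoment_empty_le_one (ι := Fin n) m
  rw [hmoment, le_div_iff₀ (by positivity)]
  calc _ ≤ 2 * 3 ^ (k ^ 3) * |sliceMoment m (firstCoords n 0)| := hbound
    _ ≤ 2 * 3 ^ (k ^ 3) := mul_le_of_le_one_right (by positivity) h0

/-- For `n ≥ 4` a perfect square and `k < √n / 2`, the slice moment
`e(k) = E[x₁⋯x_k]` on `{x ∈ {±1}ⁿ : ∑ᵢ xᵢ = √n}` satisfies `|e(k)| ≤ 2 ⋅ 3^{k³} ⋅ n^{-k/2}`. -/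
theorem stmt_10 (n k : ℕ) (hn : 4 ≤ n) (hsq : ∃ m : ℕ, n = m ^ 2)
    (hk : (k : ℝ) < Real.sqrt n / 2)
    (S : Finset (Fin n → Bool))
    (hS : S = Finset.univ.filter fun s =>
      (∑ i, (if s i then (1 : ℝ) else -1)) = Real.sqrt n)
    (hne : S.Nonempty) :
    |(∑ s ∈ S, ∏ j ∈ Finset.range k,
        (if hj : j < n then (if s ⟨j, hj⟩ then (1 : ℝ) else -1) else 0)) / S.card|
      ≤ 2 * 3 ^ (k ^ 3) / Real.sqrt n ^ k :=
  stmt_10_general n k hk S hS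
end

section
/- Let $e(k) = \mathbb{E}_x[x_1 \cdots x_k]$ where $x$ is uniform on the slice $\{x \in \{\pm 1\}^n : \sum_i x_i = \sqrt{n}\}$ (with $n$ a perfect square making the slice nonempty). Then for all $k \geq 1$, $|e(k)| \leq k^{3k} \cdot n^{-k/2}$. -/
/-!
Permuting coordinates preserves the slice `∑ i, xᵢ = c`, so the moment `E[x_T]` depends only on
`t = |T|`; call it `e(t)`.
Multiplying by `c = ∑ i, xᵢ` and using `xᵢ² = 1` gives the three-term recurrence
`c·e(t) = t·e(t-1) + (n-t)·e(t+1)`. Inductively `|e(K)|·c^K ≤ K^{3K}`: if `c ≤ K³` this is the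
trivial bound `|e(K)| ≤ 1`; otherwise `n - K ≥ c²/2`, so solving the recurrence for `e(K)` gains
a factor `c` per step, and `2·((K-1)^{3(K-1)} + (K-1)·(K-2)^{3(K-2)}) ≤ K^{3K}` closes the step.
-/

open Finset

def spin (b : Bool) : ℝ := if b then 1 else -1

lemma spin_mul_self (b : Bool) : spin b * spin b = 1 := by
  cases b <;> norm_num [spin]

lemma abs_spin (b : Bool) : |spin b| = 1 := by
  cases b <;> norm_num [spin]

noncomputable def spinSlice (n : ℕ) (c : ℝ) : Finset (Fin n → Bool) :=
  univ.filter fun s => ∑ i, spin (s i) = c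

noncomputable def sliceMomentSum {n : ℕ} (c : ℝ) (T : Finset (Fin n)) : ℝ :=
  ∑ s ∈ spinSlice n c, ∏ j ∈ T, spin (s j)

section

variable {n : ℕ} {c : ℝ}

lemma comp_perm_mem_spinSlice (σ : Equiv.Perm (Fin n)) (s : Fin n → Bool) :
    s ∘ σ ∈ spinSlice n c ↔ s ∈ spinSlice n c := by
  simp only [spinSlice, mem_filter, mem_univ, true_and, Function.comp_apply,
    Equiv.sum_comp σ (fun i => spin (s i))]

lemma sliceMomentSum_map_perm (σ : Equiv.Perm (Fin n)) (T : Finset (Fin n)) :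
    sliceMomentSum c (T.map σ.toEmbedding) = sliceMomentSum c T := by
  refine (sum_equiv (σ.arrowCongr (Equiv.refl Bool)) (fun s => ?_) fun s _ => ?_).symm
  · exact (comp_perm_mem_spinSlice σ.symm s).symm
  · simp [prod_map]

lemma sliceMomentSum_eq_of_card_eq {T T' : Finset (Fin n)} (h : #T = #T') :
    sliceMomentSum c T = sliceMomentSum c T' := by
  obtain ⟨σ, rfl⟩ := Equiv.Perm.exists_map_finset_eq T T' h
  exact (sliceMomentSum_map_perm σ T).symm

lemma sliceMomentSum_empty : sliceMomentSum (n := n) c ∅ = #(spinSlice n c) := by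
  simp [sliceMomentSum]

lemma abs_sliceMomentSum_le (T : Finset (Fin n)) :
    |sliceMomentSum c T| ≤ #(spinSlice n c) :=
  calc |sliceMomentSum c T| ≤ ∑ s ∈ spinSlice n c, |∏ j ∈ T, spin (s j)| :=
        abs_sum_le_sum_abs _ _
    _ = #(spinSlice n c) := by simp [abs_prod, abs_spin]

lemma mul_sliceMomentSum (T : Finset (Fin n)) :
    c * sliceMomentSum c T
      = ∑ i ∈ T, sliceMomentSum c (T.erase i) + ∑ i ∈ Tᶜ, sliceMomentSum c (insert i T) := by
  have hc : ∀ s ∈ spinSlice n c, ∑ i, spin (s i) = c := fun s hs => (mem_filter.mp hs).2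
  simp only [sliceMomentSum, mul_sum]
  rw [sum_congr rfl fun s hs => by rw [← hc s hs, sum_mul, ← sum_add_sum_compl T],
    sum_add_distrib]
  congr 1 <;> rw [sum_comm] <;> refine sum_congr rfl fun i hi => sum_congr rfl fun s _ => ?_
  · rw [← mul_prod_erase T _ hi, ← mul_assoc, spin_mul_self, one_mul]
  · rw [prod_insert (by simpa using hi)]

-- For `t = 0` the first term vanishes, so the truncation of `t - 1` is harmless.
lemma mul_sliceMomentSum_of_card {t : ℕ} {T₀ T₁ T₂ : Finset (Fin n)}
    (h₀ : #T₀ = t - 1) (h₁ : #T₁ = t) (h₂ : #T₂ = t + 1) :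
    c * sliceMomentSum c T₁ = t * sliceMomentSum c T₀ + (n - t) * sliceMomentSum c T₂ := by
  have ht : t ≤ n := h₁ ▸ (card_le_univ T₁).trans_eq (Fintype.card_fin n)
  have hT₀ : ∀ i ∈ T₁, sliceMomentSum c (T₁.erase i) = sliceMomentSum c T₀ := fun i hi =>
    sliceMomentSum_eq_of_card_eq (by rw [card_erase_of_mem hi, h₁, h₀])
  have hT₂ : ∀ i ∈ T₁ᶜ, sliceMomentSum c (insert i T₁) = sliceMomentSum c T₂ := fun i hi =>
    sliceMomentSum_eq_of_card_eq (by rw [card_insert_of_notMem (by simpa using hi), h₁, h₂])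
  rw [mul_sliceMomentSum, sum_congr rfl hT₀, sum_congr rfl hT₂, sum_const, sum_const,
    card_compl, Fintype.card_fin, h₁, nsmul_eq_mul, nsmul_eq_mul, Nat.cast_sub ht]

end

lemma two_mul_pow_add_le (j : ℕ) :
    2 * ((j + 1 : ℝ) ^ (3 * j + 3) + (j + 1) * j ^ (3 * j)) ≤ (j + 2) ^ (3 * j + 6) := by
  have hj : (0 : ℝ) ≤ j := j.cast_nonneg
  have h₁ : (j + 1 : ℝ) * j ^ (3 * j) ≤ (j + 1) ^ (3 * j + 3) :=
    calc (j + 1 : ℝ) * j ^ (3 * j) ≤ (j + 1) ^ (3 * j + 1) := by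
          rw [pow_succ']; gcongr; linarith
      _ ≤ (j + 1) ^ (3 * j + 3) := pow_le_pow_right₀ (by linarith) (by omega)
  have h₂ : (j + 1 : ℝ) ^ (3 * j + 3) ≤ (j + 2) ^ (3 * j + 3) := by gcongr; linarith
  have h₃ : (8 : ℝ) ≤ (j + 2) ^ 3 :=
    calc (8 : ℝ) = 2 ^ 3 := by norm_num
      _ ≤ (j + 2) ^ 3 := by gcongr; linarith
  calc 2 * ((j + 1 : ℝ) ^ (3 * j + 3) + (j + 1) * j ^ (3 * j))
      ≤ 8 * (j + 2) ^ (3 * j + 3) := by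
        linarith [pow_nonneg (by linarith : (0 : ℝ) ≤ j + 1) (3 * j + 3)]
    _ ≤ (j + 2) ^ 3 * (j + 2) ^ (3 * j + 3) := by gcongr
    _ = (j + 2) ^ (3 * j + 6) := by ring

lemma abs_mul_pow_le_of_recurrence_s11 {j : ℕ} {c C F₀ F₁ F₂ N : ℝ} (hc : 0 < c)
    (hC : c ^ 2 / 2 ≤ C) (hN : 0 ≤ N) (hrec : c * F₁ = (j + 1) * F₀ + C * F₂)
    (h₀ : |F₀| * c ^ j ≤ j ^ (3 * j) * N)
    (h₁ : |F₁| * c ^ (j + 1) ≤ (j + 1) ^ (3 * (j + 1)) * N) :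
    |F₂| * c ^ (j + 2) ≤ (j + 2) ^ (3 * (j + 2)) * N := by
  have hC₀ : 0 < C := lt_of_lt_of_le (by positivity) hC
  have hF₂ : C * |F₂| ≤ c * |F₁| + (j + 1) * |F₀| :=
    calc C * |F₂| = |c * F₁ - (j + 1) * F₀| := by
          rw [hrec, add_sub_cancel_left, abs_mul, abs_of_pos hC₀]
      _ ≤ |c * F₁| + |(j + 1) * F₀| := abs_sub _ _
      _ = c * |F₁| + (j + 1) * |F₀| := by
          rw [abs_mul, abs_mul, abs_of_pos hc, abs_of_pos (by positivity : (0 : ℝ) < j + 1)]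
  refine le_of_mul_le_mul_left ?_ hC₀
  calc C * (|F₂| * c ^ (j + 2)) = C * |F₂| * c ^ (j + 2) := by ring
    _ ≤ (c * |F₁| + (j + 1) * |F₀|) * c ^ (j + 2) := by gcongr
    _ = c ^ 2 * (|F₁| * c ^ (j + 1) + (j + 1) * (|F₀| * c ^ j)) := by ring
    _ ≤ c ^ 2 * ((j + 1) ^ (3 * (j + 1)) * N + (j + 1) * (j ^ (3 * j) * N)) := by gcongr
    _ = c ^ 2 / 2 * (2 * ((j + 1) ^ (3 * j + 3) + (j + 1) * j ^ (3 * j))) * N := by ring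
    _ ≤ C * (j + 2) ^ (3 * j + 6) * N := by gcongr; exact two_mul_pow_add_le j
    _ = C * ((j + 2) ^ (3 * (j + 2)) * N) := by ring

theorem abs_sliceMomentSum_mul_pow_le {n : ℕ} {c : ℝ} (hc : 0 ≤ c) (hcn : c ^ 2 ≤ n)
    (T : Finset (Fin n)) :
    |sliceMomentSum c T| * c ^ #T ≤ (#T : ℝ) ^ (3 * #T) * #(spinSlice n c) := by
  obtain ⟨K, hK⟩ : ∃ K, #T = K := ⟨_, rfl⟩
  induction K using Nat.strong_induction_on generalizing T with
  | _ K ih =>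
  have hKn : K ≤ n := hK ▸ (card_le_univ T).trans_eq (Fintype.card_fin n)
  rw [hK]
  rcases K with _ | _ | j
  · simp [card_eq_zero.mp hK, sliceMomentSum_empty]
  · have hrec := mul_sliceMomentSum_of_card (c := c) (T₀ := ∅) (T₁ := ∅) card_empty card_empty hK
    rw [sliceMomentSum_empty] at hrec
    have hn : (0 : ℝ) < n := by exact_mod_cast hKn
    have habs : n * |sliceMomentSum c T| = c * #(spinSlice n c) := by
      simpa [abs_mul, abs_of_nonneg hc] using congrArg abs hrec.symm
    simp only [zero_add, pow_one, Nat.cast_one, one_pow, one_mul]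
    refine le_of_mul_le_mul_left ?_ hn
    calc n * (|sliceMomentSum c T| * c) = c ^ 2 * #(spinSlice n c) := by
          rw [← mul_assoc, habs]; ring
      _ ≤ n * #(spinSlice n c) := by gcongr
  · obtain ⟨T₁, -, hT₁⟩ := exists_subset_card_eq (show j + 1 ≤ #T by omega)
    obtain ⟨T₀, -, hT₀⟩ := exists_subset_card_eq (show j ≤ #T by omega)
    have ih₀ := ih j (by omega) T₀ hT₀
    have ih₁ := ih (j + 1) (by omega) T₁ hT₁
    rw [hT₀] at ih₀
    rw [hT₁] at ih₁
    push_cast at ih₀ ih₁ ⊢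
    by_cases hcK : c ≤ (j + 2) ^ 3
    · calc |sliceMomentSum c T| * c ^ (j + 2)
          ≤ #(spinSlice n c) * ((j + 2) ^ 3) ^ (j + 2) :=
            mul_le_mul (abs_sliceMomentSum_le T) (pow_le_pow_left₀ hc hcK _) (by positivity)
              (by positivity)
        _ = ((j : ℝ) + 1 + 1) ^ (3 * (j + 1 + 1)) * #(spinSlice n c) := by rw [← pow_mul]; ring
    · replace hcK := not_le.mp hcK
      have hrec := mul_sliceMomentSum_of_card (c := c) (t := j + 1) hT₀ hT₁ hK
      have hj : (2 : ℝ) * (j + 1) ≤ (j + 2) ^ 3 := by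
        have := Nat.cast_nonneg (α := ℝ) j
        nlinarith [pow_nonneg this 3]
      have hC : c ^ 2 / 2 ≤ n - (j + 1) := by nlinarith
      have := abs_mul_pow_le_of_recurrence_s11 (lt_of_le_of_lt (by positivity) hcK) hC (by positivity)
        (by push_cast at hrec; linarith) ih₀ ih₁
      convert this using 3; ring

theorem stmt_11_general (n k : ℕ) (hk : 1 ≤ k) (hkn : k ≤ n)
    (S : Finset (Fin n → Bool))
    (hS : S = Finset.univ.filter fun s =>
      (∑ i, (if s i then (1 : ℝ) else -1)) = Real.sqrt n)
    (hne : S.Nonempty) :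
    |(∑ s ∈ S, ∏ j ∈ Finset.range k,
        (if hj : j < n then (if s ⟨j, hj⟩ then (1 : ℝ) else -1) else 0)) / S.card|
      ≤ (k : ℝ) ^ (3 * k) / Real.sqrt n ^ k := by
  replace hS : S = spinSlice n √n := hS
  set T : Finset (Fin n) := univ.filter fun i => (i : ℕ) < k
  have hT : T.map Fin.valEmbedding = range k := by
    ext j
    simp only [T, mem_map, mem_filter, mem_univ, true_and, Fin.valEmbedding_apply, mem_range]
    exact ⟨fun ⟨i, hi, hij⟩ => hij ▸ hi, fun hj => ⟨⟨j, by omega⟩, hj, rfl⟩⟩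
  have hTk : #T = k := by rw [← card_map Fin.valEmbedding, hT, card_range]
  have hsum : ∑ s ∈ S, ∏ j ∈ range k,
      (if hj : j < n then (if s ⟨j, hj⟩ then (1 : ℝ) else -1) else 0) = sliceMomentSum √n T := by
    rw [hS, ← hT]
    refine sum_congr rfl fun s _ => ?_
    simp [prod_map, spin]
  have hsqrt : 0 < √n := Real.sqrt_pos.2 (by exact_mod_cast hk.trans hkn)
  rw [hsum, abs_div, Nat.abs_cast,
    div_le_div_iff₀ (by exact_mod_cast hne.card_pos) (pow_pos hsqrt k)]
  have := abs_sliceMomentSum_mul_pow_le hsqrt.le (Real.sq_sqrt n.cast_nonneg).le T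
  rwa [hTk, ← hS] at this

/-- For `1 ≤ k ≤ n` with `n` a perfect square, the slice moment `e(k) = E[x₁⋯x_k]`
on `{x ∈ {±1}ⁿ : ∑ᵢ xᵢ = √n}` satisfies `|e(k)| ≤ k^{3k} ⋅ n^{-k/2}`. -/
theorem stmt_11 (n k : ℕ) (hk : 1 ≤ k) (hkn : k ≤ n) (hsq : ∃ m : ℕ, n = m ^ 2)
    (S : Finset (Fin n → Bool))
    (hS : S = Finset.univ.filter fun s =>
      (∑ i, (if s i then (1 : ℝ) else -1)) = Real.sqrt n)
    (hne : S.Nonempty) :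
    |(∑ s ∈ S, ∏ j ∈ Finset.range k,
        (if hj : j < n then (if s ⟨j, hj⟩ then (1 : ℝ) else -1) else 0)) / S.card|
      ≤ (k : ℝ) ^ (3 * k) / Real.sqrt n ^ k :=
  stmt_11_general n k hk hkn S hS hne
end

section
/- Let $l_1, \dots, l_k$ be positive integers with $L = l_1 + \cdots + l_k \geq 1$ and $l_k = \max_i l_i$. In the expansion of the product of probabilist's Hermite polynomials $h_{l_1}(z) \cdots h_{l_k}(z) = \sum_p c_p h_p(z)$ in the Hermite basis, every coefficient satisfies $|c_p| \leq (2L)^{L - l_k}$. -/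
/-!
The Hermite polynomials form a basis of `ℤ[X]`, and `X hₙ = hₙ₊₁ + n hₙ₋₁` shows that
multiplying a polynomial of degree `≤ d` by `X` multiplies the largest absolute value of its
Hermite coefficients by at most `d + 1`. Through `hₐ₊₂ = X hₐ₊₁ - (a + 1) hₐ`, multiplying by `hₐ`
then multiplies it by at most `(d + 2a)ᵃ`. Start from `h_{lmax}`, whose coefficients are `≤ 1`,
and multiply in the remaining factors one at a time: the degree never exceeds `L`, so the factor
`h_{lᵢ}` costs at most `(2L)^{lᵢ}`, and these exponents add up to `L - lmax`.
-/

open Polynomial Finset Module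

namespace Polynomial

theorem derivative_hermite_succ (n : ℕ) :
    derivative (hermite (n + 1)) = (n + 1) • hermite n := by
  induction n with
  | zero => simp
  | succ n ih =>
    rw [hermite_succ (n + 1), derivative_sub, derivative_mul, derivative_X, one_mul, ih,
      derivative_smul, mul_smul_comm, hermite_succ n]
    module

theorem X_mul_hermite (n : ℕ) : X * hermite n = hermite (n + 1) + n • hermite (n - 1) := by
  cases n with
  | zero => simp
  | succ n => rw [hermite_succ (n + 1), derivative_hermite_succ]; simp

noncomputable def hermiteSequence : Sequence ℤ := ⟨hermite, degree_hermite⟩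

theorem isUnit_leadingCoeff_hermiteSequence (n : ℕ) :
    IsUnit (hermiteSequence n).leadingCoeff := by
  simp [hermiteSequence, leadingCoeff_hermite]

noncomputable def hermiteBasis : Basis ℕ ℤ ℤ[X] :=
  hermiteSequence.basis isUnit_leadingCoeff_hermiteSequence

@[simp]
theorem hermiteBasis_apply (n : ℕ) : hermiteBasis n = hermite n :=
  Sequence.basis_eq_self _ _ n

theorem hermiteBasis_repr_eq_zero_of_natDegree_lt {f : ℤ[X]} {p : ℕ} (hp : f.natDegree < p) :
    hermiteBasis.repr f p = 0 := by
  have hf : f ∈ Submodule.span ℤ (hermiteBasis '' Set.Iic f.natDegree) := by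
    rw [show ⇑hermiteBasis = hermiteSequence by ext1 n; exact hermiteBasis_apply n,
      hermiteSequence.span_degreeLE fun n _ => isUnit_leadingCoeff_hermiteSequence n]
    exact mem_degreeLE.2 degree_le_natDegree
  by_contra h
  exact absurd (hermiteBasis.repr_support_subset_of_mem_span _ hf (Finsupp.mem_support_iff.2 h))
    (by simpa using hp)

theorem hermiteBasis_repr_X_mul_zero (f : ℤ[X]) :
    hermiteBasis.repr (X * f) 0 = hermiteBasis.repr f 1 := by
  have h := hermiteBasis.ext
    (f₁ := Finsupp.lapply 0 ∘ₗ hermiteBasis.repr.toLinearMap ∘ₗ LinearMap.mulLeft ℤ X)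
    (f₂ := Finsupp.lapply 1 ∘ₗ hermiteBasis.repr.toLinearMap) fun n => by
    simp only [LinearMap.comp_apply, LinearMap.mulLeft_apply, hermiteBasis_apply, X_mul_hermite]
    rw [← hermiteBasis_apply, ← hermiteBasis_apply, ← hermiteBasis_apply]
    simp only [map_add, map_nsmul, LinearEquiv.coe_coe, Basis.repr_self, Finsupp.lapply_apply]
    simp only [Finsupp.single_apply, nsmul_eq_mul]
    rcases n with _ | _ | n <;> simp
  exact LinearMap.congr_fun h f

theorem hermiteBasis_repr_X_mul_succ (f : ℤ[X]) (q : ℕ) :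
    hermiteBasis.repr (X * f) (q + 1) =
      hermiteBasis.repr f q + (q + 2) * hermiteBasis.repr f (q + 2) := by
  have h := hermiteBasis.ext
    (f₁ := Finsupp.lapply (q + 1) ∘ₗ hermiteBasis.repr.toLinearMap ∘ₗ LinearMap.mulLeft ℤ X)
    (f₂ := Finsupp.lapply q ∘ₗ hermiteBasis.repr.toLinearMap +
      ((q : ℤ) + 2) • Finsupp.lapply (q + 2) ∘ₗ hermiteBasis.repr.toLinearMap) fun n => by
    simp only [LinearMap.comp_apply, LinearMap.mulLeft_apply, hermiteBasis_apply, X_mul_hermite]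
    rw [← hermiteBasis_apply, ← hermiteBasis_apply, ← hermiteBasis_apply]
    simp only [map_add, map_nsmul, LinearEquiv.coe_coe, Basis.repr_self, LinearMap.comp_apply,
      LinearMap.add_apply, LinearMap.smul_apply, Finsupp.lapply_apply]
    simp only [Finsupp.single_apply, smul_eq_mul, nsmul_eq_mul]
    split_ifs <;> omega
  exact LinearMap.congr_fun h f

theorem abs_hermiteBasis_repr_X_mul_le {f : ℤ[X]} {d : ℕ} {B : ℤ} (hf : f.natDegree ≤ d)
    (hB : ∀ p, |hermiteBasis.repr f p| ≤ B) (q : ℕ) :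
    |hermiteBasis.repr (X * f) q| ≤ (d + 1) * B := by
  have hB0 : 0 ≤ B := (abs_nonneg _).trans (hB 0)
  cases q with
  | zero =>
    rw [hermiteBasis_repr_X_mul_zero]
    nlinarith [hB 1, (Nat.cast_nonneg d : (0 : ℤ) ≤ d)]
  | succ q =>
    have hshift : |(q + 2 : ℤ) * hermiteBasis.repr f (q + 2)| ≤ d * B := by
      rcases lt_or_ge d (q + 2) with h | h
      · rw [hermiteBasis_repr_eq_zero_of_natDegree_lt (hf.trans_lt h), mul_zero, abs_zero]
        positivity
      · rw [abs_mul, abs_of_nonneg (by positivity)]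
        exact mul_le_mul (by exact_mod_cast h) (hB _) (abs_nonneg _) (by positivity)
    calc |hermiteBasis.repr (X * f) (q + 1)|
        ≤ |hermiteBasis.repr f q| + |(q + 2 : ℤ) * hermiteBasis.repr f (q + 2)| := by
          rw [hermiteBasis_repr_X_mul_succ]; exact abs_add_le _ _
      _ ≤ B + d * B := add_le_add (hB q) hshift
      _ = (d + 1) * B := by ring

theorem hermite_add_two (n : ℕ) :
    hermite (n + 2) = X * hermite (n + 1) - (n + 1) • hermite n := by
  rw [X_mul_hermite, Nat.add_sub_cancel, add_sub_cancel_right]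

theorem abs_hermiteBasis_repr_hermite_mul_le {f : ℤ[X]} {d : ℕ} {B : ℤ} (hf : f.natDegree ≤ d)
    (hB : ∀ p, |hermiteBasis.repr f p| ≤ B) (a q : ℕ) :
    |hermiteBasis.repr (hermite a * f) q| ≤ ((d : ℤ) + 2 * a) ^ a * B := by
  have hB0 : 0 ≤ B := (abs_nonneg _).trans (hB 0)
  induction a using Nat.twoStepInduction generalizing q with
  | zero => simpa using hB q
  | one =>
    rw [hermite_one]
    refine (abs_hermiteBasis_repr_X_mul_le hf hB q).trans ?_
    push_cast
    nlinarith
  | more a ih₀ ih₁ =>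
    have hdeg : (hermite (a + 1) * f).natDegree ≤ d + (a + 1) :=
      natDegree_mul_le.trans (by rw [natDegree_hermite]; omega)
    have hX := abs_hermiteBasis_repr_X_mul_le hdeg ih₁ q
    rw [hermite_add_two, sub_mul, mul_assoc, smul_mul_assoc, map_sub, map_nsmul, Finsupp.sub_apply,
      Finsupp.smul_apply, nsmul_eq_mul]
    set N : ℤ := d + 2 * ↑(a + 2) with hN
    have hN₁ : ((d : ℤ) + 2 * ↑(a + 1)) ^ (a + 1) ≤ N ^ (a + 1) := by
      gcongr; push_cast [hN]; linarith
    have hN₀ : ((d : ℤ) + 2 * a) ^ a ≤ N ^ (a + 1) :=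
      calc ((d : ℤ) + 2 * a) ^ a ≤ N ^ a := by gcongr; push_cast [hN]; linarith
        _ ≤ N ^ (a + 1) := pow_le_pow_right₀ (by push_cast [hN]; linarith) a.le_succ
    calc _ ≤ |hermiteBasis.repr (X * (hermite (a + 1) * f)) q|
          + ↑(a + 1) * |hermiteBasis.repr (hermite a * f) q| := by
          grw [abs_sub, abs_mul, Nat.abs_cast]
      _ ≤ (↑(d + (a + 1)) + 1) * (N ^ (a + 1) * B) + ↑(a + 1) * (N ^ (a + 1) * B) := by
          grw [hX, ih₀, hN₁, hN₀]
      _ ≤ N * (N ^ (a + 1) * B) := by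
          rw [← add_mul]
          gcongr
          push_cast [hN]; linarith
      _ = N ^ (a + 2) * B := by ring

theorem abs_hermiteBasis_repr_mul_prod_hermite_le {ι : Type*} (s : Finset ι) (l : ι → ℕ)
    {f : ℤ[X]} {d T : ℕ} {B : ℤ} (hf : f.natDegree ≤ d) (hB : ∀ p, |hermiteBasis.repr f p| ≤ B)
    (hT : d + ∑ i ∈ s, l i ≤ T) (q : ℕ) :
    |hermiteBasis.repr (f * ∏ i ∈ s, hermite (l i)) q| ≤ (2 * T : ℤ) ^ (∑ i ∈ s, l i) * B := by
  classical
  induction s using Finset.induction_on generalizing q with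
  | empty => simpa using hB q
  | insert i s hi ih =>
    rw [sum_insert hi] at hT ⊢
    have hdeg : (f * ∏ j ∈ s, hermite (l j)).natDegree ≤ d + ∑ j ∈ s, l j := by
      refine natDegree_mul_le.trans (add_le_add hf ((natDegree_prod_le _ _).trans ?_))
      simp [natDegree_hermite]
    rw [prod_insert hi, mul_left_comm]
    calc |hermiteBasis.repr (hermite (l i) * (f * ∏ j ∈ s, hermite (l j))) q|
        ≤ ((↑(d + ∑ j ∈ s, l j) : ℤ) + 2 * l i) ^ l i * ((2 * T : ℤ) ^ (∑ j ∈ s, l j) * B) :=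
          abs_hermiteBasis_repr_hermite_mul_le hdeg (ih (by omega)) (l i) q
      _ ≤ (2 * T : ℤ) ^ l i * ((2 * T : ℤ) ^ (∑ j ∈ s, l j) * B) := by
          have hB0 : 0 ≤ B := (abs_nonneg _).trans (hB 0)
          gcongr
          exact_mod_cast (by omega : d + ∑ j ∈ s, l j + 2 * l i ≤ 2 * T)
      _ = (2 * T : ℤ) ^ (l i + ∑ j ∈ s, l j) * B := by ring

theorem hermiteBasis_repr_sum_C_mul_hermite (c : ℕ → ℤ) {N p : ℕ} (hp : p < N) :
    hermiteBasis.repr (∑ q ∈ range N, C (c q) * hermite q) p = c p := by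
  simp_rw [← smul_eq_C_mul, ← hermiteBasis_apply, map_sum, map_smul, Basis.repr_self]
  simp [Finsupp.single_apply, hp]

theorem abs_hermiteBasis_repr_hermite_le_one (n q : ℕ) : |hermiteBasis.repr (hermite n) q| ≤ 1 := by
  rw [← hermiteBasis_apply, Basis.repr_self, Finsupp.single_apply]
  split_ifs <;> simp

end Polynomial

theorem stmt_12_general (k : ℕ) (l : Fin k → ℕ)
    (L : ℕ) (hLdef : L = ∑ i, l i)
    (lmax : ℕ) (hmem : ∃ i, l i = lmax)
    (c : ℕ → ℤ)
    (hexp : (∏ i, Polynomial.hermite (l i)) =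
      ∑ p ∈ Finset.range (L + 1), Polynomial.C (c p) * Polynomial.hermite p) :
    ∀ p ≤ L, |c p| ≤ ((2 * L) ^ (L - lmax) : ℤ) := by
  intro p hp
  obtain ⟨i, rfl⟩ := hmem
  have hL : l i + ∑ j ∈ univ.erase i, l j = L := by rw [hLdef, add_sum_erase _ _ (mem_univ i)]
  rw [← hermiteBasis_repr_sum_C_mul_hermite c (Nat.lt_succ_of_le hp), ← hexp,
    ← mul_prod_erase _ _ (mem_univ i), show L - l i = ∑ j ∈ univ.erase i, l j by omega]
  simpa using abs_hermiteBasis_repr_mul_prod_hermite_le (univ.erase i) l natDegree_hermite.le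
    (abs_hermiteBasis_repr_hermite_le_one _) hL.le p

/-- The coefficients in the Hermite-basis expansion of a product of Hermite polynomials
`h_{l₁} ⋯ h_{l_k}` are bounded in magnitude by `(2L)^{L - l_max}`, where `L = ∑ lᵢ`. -/
theorem stmt_12 (k : ℕ) (l : Fin k → ℕ) (hl : ∀ i, 1 ≤ l i)
    (L : ℕ) (hLdef : L = ∑ i, l i) (hL : 1 ≤ L)
    (lmax : ℕ) (hmax : ∀ i, l i ≤ lmax) (hmem : ∃ i, l i = lmax)
    (c : ℕ → ℤ)
    (hexp : (∏ i, Polynomial.hermite (l i)) =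
      ∑ p ∈ Finset.range (L + 1), Polynomial.C (c p) * Polynomial.hermite p) :
    ∀ p ≤ L, |c p| ≤ ((2 * L) ^ (L - lmax) : ℤ) :=
  stmt_12_general k l L hLdef lmax hmem c hexp
end

section
/- The linearization coefficients of probabilist's Hermite polynomials are given by $h_a(z) h_b(z) = \sum_{\delta = 0}^{\min(a,b)} \binom{a}{\delta}\binom{b}{\delta} \delta! \; h_{a + b - 2\delta}(z)$ for all nonnegative integers $a, b$. -/
open Polynomial

lemma deriv_hermite (n : ℕ) :
    derivative (hermite (n+1)) = C ((n:ℤ)+1) * hermite n := by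
  induction n with
  | zero => simp [hermite_one, hermite_zero]
  | succ n ih =>
    rw [hermite_succ (n+1), derivative_sub, derivative_mul, derivative_X, ih,
      derivative_mul, derivative_C, hermite_succ n]
    push_cast
    simp only [C_add, C_1]
    ring

lemma key (a b : ℕ) :
    hermite (a+1) * hermite (b+1) =
      X * (hermite a * hermite (b+1)) - derivative (hermite a * hermite (b+1))
        + C ((b:ℤ)+1) * (hermite a * hermite b) := by
  rw [derivative_mul, deriv_hermite b, hermite_succ a]
  ring

lemma extendSum (a b M : ℕ) (h : min a b + 1 ≤ M) (f : ℕ → Polynomial ℤ) :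
    ∑ δ ∈ Finset.range (min a b + 1),
        C ((a.choose δ * b.choose δ * δ.factorial : ℕ) : ℤ) * f δ
      = ∑ δ ∈ Finset.range M,
        C ((a.choose δ * b.choose δ * δ.factorial : ℕ) : ℤ) * f δ := by
  apply Finset.sum_subset (Finset.range_subset_range.2 h)
  intro x hx hx2
  simp only [Finset.mem_range, not_lt] at hx2
  have : a.choose x = 0 ∨ b.choose x = 0 := by
    rcases Nat.lt_or_ge a x with h'|h'
    · exact Or.inl (Nat.choose_eq_zero_of_lt h')
    · exact Or.inr (Nat.choose_eq_zero_of_lt (by omega))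
  rcases this with h'|h' <;> simp [h']

lemma coeffId (a b i : ℕ) :
    (a+1).choose (i+1) * (b+1).choose (i+1) * (i+1).factorial
      = a.choose (i+1) * (b+1).choose (i+1) * (i+1).factorial
        + (b+1) * (a.choose i * b.choose i * i.factorial) := by
  have h1 : (b+1) * b.choose i = (b+1).choose (i+1) * (i+1) := Nat.add_one_mul_choose_eq b i
  rw [Nat.choose_succ_succ, Nat.factorial_succ]
  have h2 : (b+1) * (a.choose i * b.choose i * i.factorial)
      = a.choose i * ((b+1) * b.choose i) * i.factorial := by ring
  rw [h2, h1]
  ring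

/-- Hermite linearization:
`h_a h_b = ∑_{δ=0}^{min(a,b)} (a choose δ)(b choose δ) δ! h_{a+b-2δ}`. -/
theorem stmt_13 (a b : ℕ) :
    Polynomial.hermite a * Polynomial.hermite b =
      ∑ δ ∈ Finset.range (min a b + 1),
        Polynomial.C ((a.choose δ * b.choose δ * δ.factorial : ℕ) : ℤ) *
          Polynomial.hermite (a + b - 2 * δ) := by
  induction a generalizing b with
  | zero => simp [hermite_zero]
  | succ a ih =>
    match b with
    | 0 => simp [hermite_zero]
    | b+1 =>
      rw [key, ih (b+1), ih b]
      have h1 : X * (∑ δ ∈ Finset.range (min a (b+1) + 1),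
            C ((a.choose δ * (b+1).choose δ * δ.factorial : ℕ) : ℤ) * hermite (a + (b+1) - 2*δ))
          - derivative (∑ δ ∈ Finset.range (min a (b+1) + 1),
            C ((a.choose δ * (b+1).choose δ * δ.factorial : ℕ) : ℤ) * hermite (a + (b+1) - 2*δ))
          = ∑ δ ∈ Finset.range (min a (b+1) + 1),
            C ((a.choose δ * (b+1).choose δ * δ.factorial : ℕ) : ℤ) * hermite (a + b + 2 - 2*δ) := by
        rw [Finset.mul_sum, derivative_sum, ← Finset.sum_sub_distrib]
        refine Finset.sum_congr rfl fun δ hδ => ?_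
        simp only [Finset.mem_range] at hδ
        have h2 : a + b + 2 - 2*δ = (a + (b+1) - 2*δ) + 1 := by omega
        rw [h2, hermite_succ, derivative_mul, derivative_C]
        ring
      rw [h1]
      have h2 : (∑ δ ∈ Finset.range (min a b + 1),
            C ((a.choose δ * b.choose δ * δ.factorial : ℕ) : ℤ) * hermite (a + b - 2*δ))
          = ∑ δ ∈ Finset.range (a+b+3),
            C ((a.choose δ * b.choose δ * δ.factorial : ℕ) : ℤ) * hermite (a + b + 2 - 2*(δ+1)) := by
        rw [Finset.sum_congr rfl (fun δ _ => by
          rw [show a + b - 2*δ = a + b + 2 - 2*(δ+1) from by omega])]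
        exact extendSum a b (a+b+3) (by omega) _
      rw [h2]
      rw [extendSum a (b+1) (a+b+3+1) (by omega) (fun δ => hermite (a+b+2-2*δ))]
      rw [show min (a+1) (b+1) + 1 = min (a+1) (b+1) + 1 from rfl]
      have h0 : (∑ δ ∈ Finset.range (min (a+1) (b+1) + 1),
            C (((a+1).choose δ * (b+1).choose δ * δ.factorial : ℕ) : ℤ) * hermite (a+1 + (b+1) - 2*δ))
          = ∑ δ ∈ Finset.range (a+b+3+1),
            C (((a+1).choose δ * (b+1).choose δ * δ.factorial : ℕ) : ℤ) * hermite (a+b+2 - 2*δ) := by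
        rw [Finset.sum_congr rfl (fun δ _ => by
          rw [show a+1 + (b+1) - 2*δ = a+b+2 - 2*δ from by omega])]
        exact extendSum (a+1) (b+1) (a+b+3+1) (by omega) _
      rw [h0]
      rw [Finset.sum_range_succ' (fun δ => C (((a+1).choose δ * (b+1).choose δ * δ.factorial : ℕ) : ℤ) * hermite (a+b+2 - 2*δ)) (a+b+3)]
      rw [Finset.sum_range_succ' (fun δ => C ((a.choose δ * (b+1).choose δ * δ.factorial : ℕ) : ℤ) * hermite (a+b+2 - 2*δ)) (a+b+3)]
      rw [Finset.mul_sum, add_right_comm, ← Finset.sum_add_distrib]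
      congr 1
      swap
      · norm_num
      refine Finset.sum_congr rfl fun i _ => ?_
      rw [← mul_assoc, ← C_mul, ← add_mul, ← C_add]
      congr 1
      push_cast [coeffId a b i]
      ring
end

section
/- Let $\widetilde{\mathbb{E}}'$ be a degree-$D$ pseudoexpectation operator on variables $v_1, \dots, v_p$ and let $d_1, \dots, d_n \in \mathbb{R}^p$ satisfy $\widetilde{\mathbb{E}}'[\langle v, d_u \rangle^2] = 1$ for all $u \in [n]$. Define a linear functional $\widetilde{\mathbb{E}}$ on multilinear polynomials in variables $b_1, \dots, b_n$ by $\widetilde{\mathbb{E}}[\prod_{u \in S} b_u] := \widetilde{\mathbb{E}}'[\prod_{u \in S} \langle v, d_u \rangle]$ for $|S| \leq D$. Then $\widetilde{\mathbb{E}}$ is a valid degree-$D$ pseudoexpectation over the hypercube: $\widetilde{\mathbb{E}}[1] = 1$, $\widetilde{\mathbb{E}}[p^2] \geq 0$ for every multilinear polynomial $p$ of degree at most $D/2$, and $\widetilde{\mathbb{E}}$ respects the boolean constraints $b_u^2 = 1$. -/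
open MvPolynomial

lemma aux_totalDegree_aeval_le {σ τ : Type*} (g : σ → MvPolynomial τ ℝ)
    (hg : ∀ s, (g s).totalDegree ≤ 1) (q : MvPolynomial σ ℝ) :
    (aeval g q).totalDegree ≤ q.totalDegree := by
  conv_lhs => rw [q.as_sum, map_sum]
  refine (totalDegree_finset_sum _ _).trans (Finset.sup_le fun m hm => ?_)
  rw [aeval_monomial]
  refine (totalDegree_mul _ _).trans ?_
  have h1 : (algebraMap ℝ (MvPolynomial τ ℝ) (q.coeff m)).totalDegree = 0 :=
    totalDegree_C _
  rw [h1, zero_add]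
  refine le_trans ?_ (le_totalDegree hm)
  rw [Finsupp.prod]
  refine (totalDegree_finset_prod _ _).trans ?_
  rw [Finsupp.sum]
  refine Finset.sum_le_sum fun s _ => ?_
  calc (g s ^ m s).totalDegree ≤ m s * (g s).totalDegree := totalDegree_pow _ _
    _ ≤ m s * 1 := Nat.mul_le_mul_left _ (hg s)
    _ = m s := Nat.mul_one _

/-- Transferring a Planted Affine Planes pseudoexpectation to a boolean one: if `Ẽ'` is a
degree-`D` pseudoexpectation on `v₁,…,v_p` with `Ẽ'[⟨v,d_u⟩²] = 1` for all `u`, then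
`Ẽ[f(b)] := Ẽ'[f(⟨v,d₁⟩,…,⟨v,d_n⟩)]` is a valid degree-`D` pseudoexpectation over the
hypercube: `Ẽ[1] = 1`, `Ẽ[q²] ≥ 0` for multilinear `q` of degree at most `D/2`, and `Ẽ`
respects the boolean constraints `b_u² = 1`. -/
theorem stmt_17 (p n D : ℕ) (d : Fin n → Fin p → ℝ)
    (pE' : MvPolynomial (Fin p) ℝ →ₗ[ℝ] ℝ)
    (hone : pE' 1 = 1)
    (hsos : ∀ f : MvPolynomial (Fin p) ℝ, (f * f).totalDegree ≤ D → 0 ≤ pE' (f * f))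
    (hconstr : ∀ (u : Fin n) (q : MvPolynomial (Fin p) ℝ), q.totalDegree ≤ D - 2 →
      pE' (q * ((∑ i, C (d u i) * X i) ^ 2 - 1)) = 0)
    (hunit : ∀ u : Fin n, pE' ((∑ i, C (d u i) * X i) ^ 2) = 1) :
    (pE' (aeval (fun u : Fin n => ∑ i, C (d u i) * X i)
        (1 : MvPolynomial (Fin n) ℝ)) = 1) ∧
    (∀ q : MvPolynomial (Fin n) ℝ,
        (∀ m ∈ q.support, ∀ u : Fin n, m u ≤ 1) → q.totalDegree ≤ D / 2 →
        0 ≤ pE' (aeval (fun u : Fin n => ∑ i, C (d u i) * X i) (q * q))) ∧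
    (∀ (u : Fin n) (q : MvPolynomial (Fin n) ℝ), q.totalDegree ≤ D - 2 →
        pE' (aeval (fun u : Fin n => ∑ i, C (d u i) * X i)
          (q * (X u ^ 2 - 1))) = 0) := by
  set g : Fin n → MvPolynomial (Fin p) ℝ := fun u => ∑ i, C (d u i) * X i with hgdef
  have hg : ∀ u, (g u).totalDegree ≤ 1 := by
    intro u
    refine (totalDegree_finset_sum _ _).trans (Finset.sup_le fun i _ => ?_)
    refine (totalDegree_mul _ _).trans ?_
    simp [totalDegree_C, totalDegree_X]
  refine ⟨by simpa using hone, ?_, ?_⟩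
  · intro q _ hq
    rw [map_mul]
    apply hsos
    refine (totalDegree_mul _ _).trans ?_
    have := (aux_totalDegree_aeval_le g hg q).trans hq
    omega
  · intro u q hq
    rw [map_mul, map_sub, map_one, map_pow, aeval_X]
    exact hconstr u _ ((aux_totalDegree_aeval_le g hg q).trans hq)
end
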